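/- arXiv:2005.02441 — 2 statements merged into one kernel-verified Lean document; each statement's English description precedes it below -/
import Mathlib

section
/- Proposition 2, case m_B < μ_B (Eq. (14)): assume μ_B > m_B ≥ 1 and N_A ≥ 1, and let F_B(x) = [F₁(x)]^{N_A} where F₁ is the κ-μ shadowed CDF with parameters (N_B·ȳ_B, κ_B, N_B·μ_B, N_B·m_B). Then at every x > 0, F_B has derivative f_B(x) = Σ_{k=1}^{N_A} (−1)^k·C(N_A,k)·Σ_{c=0}^{k} C(k,c)·Σ_{(p)∈ρ(c,ν_B)} (c!/(p₁!⋯p_{ν_B}!))·∏_{q=1}^{ν_B} [ (1/Δ₂ᴮ)^{ν_B−q}/(ν_B−q)!·Σ_{w=1}^{q} Aᴮ₂_w ]^{p_q}·Σ_{(s)∈ρ(k−c,η_B)} ((k−c)!/(s₁!⋯s_{η_B}!))·∏_{t=1}^{η_B} [ (1/Δ₁ᴮ)^{η_B−t}/(η_B−t)!·Σ_{w=1}^{t} Aᴮ₁_w ]^{s_t}·(exp(−x((k−c)/Δ₁ᴮ + c/Δ₂ᴮ))/(Δ₁ᴮ·Δ₂ᴮ))·x^{S−1}·(Δ₁ᴮ·Δ₂ᴮ·S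 − x·(Δ₁ᴮ·c + Δ₂ᴮ·(k−c))), where S = Σ_{t=1}^{η_B}(η_B−t)s_t + Σ_{q=1}^{ν_B}(ν_B−q)p_q. -/
/-!
Each of the two sums in the κ-μ shadowed CDF is `e^{-x/Δ}` times a polynomial in `x`:
exchanging the sums over `j` and `r` collects the coefficient of `x^{n-1-t}`. Expanding
`(1 - E₁ - E₂)^N` by the binomial theorem, and the powers of `E₁` and `E₂` by the multinomial
theorem, writes `F_B` as a finite linear combination of functions `e^{-a x} x^S`, which are
differentiated term by term.
-/

/- κ-μ shadowed parameters and mixture coefficients (case m < μ). -/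

noncomputable def Δ₁ (g κ : ℝ) (μ : ℕ) : ℝ := g / (μ * (1 + κ))

noncomputable def Δ₂ (g κ : ℝ) (μ m : ℕ) : ℝ := ((μ * κ + m) / m) * g / (μ * (1 + κ))

noncomputable def A1 (κ : ℝ) (μ m j : ℕ) : ℝ :=
  (-1 : ℝ) ^ m * (Nat.choose (m + j - 2) (j - 1) : ℝ) *
    ((m : ℝ) / (μ * κ + m)) ^ m * ((μ * κ) / (μ * κ + m)) ^ (-(m : ℤ) - j + 1)

noncomputable def A2 (κ : ℝ) (μ m j : ℕ) : ℝ :=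
  (-1 : ℝ) ^ (j - 1) * (Nat.choose (μ - m + j - 2) (j - 1) : ℝ) *
    ((m : ℝ) / (μ * κ + m)) ^ (j - 1) * ((μ * κ) / (μ * κ + m)) ^ ((m : ℤ) - μ - j + 1)

/-- The κ-μ shadowed CDF in the case `m < μ`. -/
noncomputable def Fcdf1 (g κ : ℝ) (μ m : ℕ) (x : ℝ) : ℝ :=
  1 - (∑ j ∈ Finset.Icc 1 (μ - m), A1 κ μ m j * Real.exp (-x / Δ₁ g κ μ) *
        ∑ r ∈ Finset.range (μ - m - j + 1), (x / Δ₁ g κ μ) ^ r / (Nat.factorial r : ℝ))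
    - ∑ j ∈ Finset.Icc 1 m, A2 κ μ m j * Real.exp (-x / Δ₂ g κ μ m) *
        ∑ r ∈ Finset.range (m - j + 1), (x / Δ₂ g κ μ m) ^ r / (Nat.factorial r : ℝ)

open Finset Real
open scoped Nat

noncomputable def erlangMixture (n : ℕ) (A : ℕ → ℝ) (D x : ℝ) : ℝ :=
  ∑ j ∈ Icc 1 n, A j * exp (-x / D) * ∑ r ∈ range (n - j + 1), (x / D) ^ r / (r ! : ℝ)

noncomputable def erlangMixtureCoeff (A : ℕ → ℝ) (D : ℝ) (n t : ℕ) : ℝ :=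
  (1 / D) ^ (n - 1 - t) / ((n - 1 - t)! : ℝ) * ∑ w ∈ Icc 1 (t + 1), A w

theorem erlangMixture_eq (n : ℕ) (A : ℕ → ℝ) (D x : ℝ) :
    erlangMixture n A D x =
      exp (-x / D) * ∑ t : Fin n, erlangMixtureCoeff A D n t * x ^ (n - 1 - t) := by
  have hterm (j : ℕ) : A j * exp (-x / D) * ∑ r ∈ range (n - j + 1), (x / D) ^ r / (r ! : ℝ)
      = exp (-x / D) * ∑ r ∈ range (n - j + 1), A j * ((x / D) ^ r / (r ! : ℝ)) := by
    rw [mul_comm (A j), mul_assoc, mul_sum]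
  have hswap : ∑ j ∈ Icc 1 n, ∑ r ∈ range (n - j + 1), A j * ((x / D) ^ r / (r ! : ℝ))
      = ∑ r ∈ range n, ∑ j ∈ Icc 1 (n - r), A j * ((x / D) ^ r / (r ! : ℝ)) :=
    sum_comm' fun j r => by simp only [mem_Icc, mem_range]; omega
  simp_rw [erlangMixture, hterm]
  rw [← mul_sum, hswap, ← sum_range_reflect,
    Fin.sum_univ_eq_sum_range (fun t => erlangMixtureCoeff A D n t * x ^ (n - 1 - t))]
  refine congrArg _ (sum_congr rfl fun t ht => ?_)
  rw [erlangMixtureCoeff, show n - (n - 1 - t) = t + 1 by have := mem_range.mp ht; omega,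
    ← sum_mul, div_pow, one_div_pow]
  ring

theorem sum_pow_eq_sum_antidiagonalTuple {K : Type*} [Field K] [CharZero K] (n c : ℕ)
    (y : Fin n → K) :
    (∑ q, y q) ^ c = ∑ p ∈ Nat.antidiagonalTuple n c,
      ((c ! : K) / ∏ q, ((p q)! : K)) * ∏ q, y q ^ p q := by
  rw [sum_pow_eq_sum_piAntidiag, piAntidiag_univ_fin_eq_antidiagonalTuple]
  refine sum_congr rfl fun p hp => ?_
  rw [Nat.multinomial, Nat.cast_div (Nat.prod_factorial_dvd_factorial_sum _ _)
    (Nat.cast_ne_zero.mpr (by positivity)),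
    Nat.mem_antidiagonalTuple.mp hp, Nat.cast_prod]

def weightedDegree (n : ℕ) (p : Fin n → ℕ) : ℕ := ∑ t : Fin n, (n - 1 - t) * p t

theorem pow_sum_mul_pow_eq_sum_antidiagonalTuple (n c : ℕ) (b : Fin n → ℝ) (y : ℝ) :
    (∑ t : Fin n, b t * y ^ (n - 1 - t)) ^ c = ∑ p ∈ Nat.antidiagonalTuple n c,
      ((c ! : ℝ) / ∏ q, ((p q)! : ℝ)) * (∏ q, b q ^ p q) * y ^ weightedDegree n p := by
  rw [sum_pow_eq_sum_antidiagonalTuple]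
  refine sum_congr rfl fun p _ => ?_
  simp_rw [mul_pow, prod_mul_distrib, ← pow_mul, prod_pow_eq_pow_sum, weightedDegree, mul_assoc]

theorem one_sub_sub_pow_eq {R : Type*} [CommRing R] (u v : R) (N : ℕ) :
    (1 - u - v) ^ N = 1 + ∑ k ∈ Icc 1 N, (-1) ^ k * N.choose k *
      ∑ c ∈ range (k + 1), k.choose c * (v ^ c * u ^ (k - c)) := by
  rw [show 1 - u - v = -(v + u) + 1 by ring, add_pow, range_eq_Ico,
    sum_eq_sum_Ico_succ_bot (by omega : 0 < N + 1), zero_add,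
    Ico_add_one_right_eq_Icc]
  simp only [pow_zero, one_pow, mul_one, Nat.choose_zero_right, Nat.cast_one]
  congr 1
  refine sum_congr rfl fun k _ => ?_
  rw [neg_pow, add_pow, mul_right_comm]
  exact congrArg _ (sum_congr rfl fun c _ => by ring)

noncomputable def mixturePowExpansion (N n₁ n₂ : ℕ) (b₁ : Fin n₁ → ℝ) (b₂ : Fin n₂ → ℝ)
    (f : ℕ → ℕ → (Fin n₂ → ℕ) → (Fin n₁ → ℕ) → ℝ) : ℝ :=
  ∑ k ∈ Icc 1 N, (-1) ^ k * (N.choose k : ℝ) * ∑ c ∈ range (k + 1), (k.choose c : ℝ) *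
    ∑ p ∈ Nat.antidiagonalTuple n₂ c, ((c ! : ℝ) / ∏ q, ((p q)! : ℝ)) * (∏ q, b₂ q ^ p q) *
      ∑ s ∈ Nat.antidiagonalTuple n₁ (k - c),
        (((k - c)! : ℝ) / ∏ t, ((s t)! : ℝ)) * (∏ t, b₁ t ^ s t) * f k c p s

theorem one_sub_erlangMixture_sub_erlangMixture_pow (N n₁ n₂ : ℕ) (A₁ A₂ : ℕ → ℝ)
    (D₁ D₂ y : ℝ) :
    (1 - erlangMixture n₁ A₁ D₁ y - erlangMixture n₂ A₂ D₂ y) ^ N =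
      1 + mixturePowExpansion N n₁ n₂ (fun t => erlangMixtureCoeff A₁ D₁ n₁ t)
        (fun q => erlangMixtureCoeff A₂ D₂ n₂ q) fun k c p s =>
          exp (-((((k - c : ℕ) : ℝ) / D₁ + c / D₂) * y)) *
            y ^ (weightedDegree n₁ s + weightedDegree n₂ p) := by
  rw [one_sub_sub_pow_eq, mixturePowExpansion]
  congr 1
  refine sum_congr rfl fun k _ => congrArg _ (sum_congr rfl fun c _ => congrArg _ ?_)
  have hexp : exp (-y / D₂) ^ c * exp (-y / D₁) ^ (k - c) =
      exp (-((((k - c : ℕ) : ℝ) / D₁ + c / D₂) * y)) := by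
    rw [← exp_nat_mul, ← exp_nat_mul, ← exp_add]
    ring_nf
  rw [erlangMixture_eq, erlangMixture_eq, mul_pow, mul_pow,
    pow_sum_mul_pow_eq_sum_antidiagonalTuple, pow_sum_mul_pow_eq_sum_antidiagonalTuple,
    mul_mul_mul_comm, hexp, sum_mul, mul_sum]
  refine sum_congr rfl fun p _ => ?_
  rw [mul_sum, mul_sum, mul_sum]
  refine sum_congr rfl fun s _ => ?_
  rw [pow_add]
  ring

theorem hasDerivAt_mixturePowExpansion {N n₁ n₂ : ℕ} (b₁ : Fin n₁ → ℝ) (b₂ : Fin n₂ → ℝ)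
    {f : ℕ → ℕ → (Fin n₂ → ℕ) → (Fin n₁ → ℕ) → ℝ → ℝ}
    {f' : ℕ → ℕ → (Fin n₂ → ℕ) → (Fin n₁ → ℕ) → ℝ} {x : ℝ}
    (hf : ∀ k c p s, HasDerivAt (f k c p s) (f' k c p s) x) :
    HasDerivAt (fun y => mixturePowExpansion N n₁ n₂ b₁ b₂ fun k c p s => f k c p s y)
      (mixturePowExpansion N n₁ n₂ b₁ b₂ f') x := by
  unfold mixturePowExpansion
  refine .fun_sum fun k _ => .const_mul _ <| .fun_sum fun c _ => .const_mul _ <|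
    .fun_sum fun p _ => .const_mul _ <| .fun_sum fun s _ => .const_mul _ (hf k c p s)

theorem hasDerivAt_exp_neg_mul_mul_pow (a : ℝ) (S : ℕ) {x : ℝ} (hx : x ≠ 0) :
    HasDerivAt (fun y => exp (-(a * y)) * y ^ S)
      (exp (-(a * x)) * x ^ ((S : ℤ) - 1) * (S - a * x)) x := by
  have hexp : HasDerivAt (fun y => exp (-(a * y))) (exp (-(a * x)) * -a) x := by
    simpa using ((hasDerivAt_id x).const_mul a).neg.exp
  refine (hexp.mul (hasDerivAt_pow S x)).congr_deriv ?_
  rw [zpow_sub₀ hx, zpow_natCast, zpow_one]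
  rcases S with _ | S
  · field_simp
    ring
  · rw [Nat.add_sub_cancel, pow_succ]
    field_simp
    push_cast
    ring

theorem hasDerivAt_one_sub_erlangMixture_sub_erlangMixture_pow (N n₁ n₂ : ℕ)
    (A₁ A₂ : ℕ → ℝ) {D₁ D₂ x : ℝ} (hD₁ : D₁ ≠ 0) (hD₂ : D₂ ≠ 0) (hx : x ≠ 0) :
    HasDerivAt (fun y => (1 - erlangMixture n₁ A₁ D₁ y - erlangMixture n₂ A₂ D₂ y) ^ N)
      (mixturePowExpansion N n₁ n₂ (fun t => erlangMixtureCoeff A₁ D₁ n₁ t)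
        (fun q => erlangMixtureCoeff A₂ D₂ n₂ q) fun k c p s =>
          exp (-x * (((k - c : ℕ) : ℝ) / D₁ + c / D₂)) / (D₁ * D₂) *
            x ^ (((weightedDegree n₁ s + weightedDegree n₂ p : ℕ) : ℤ) - 1) *
            (D₁ * D₂ * ((weightedDegree n₁ s + weightedDegree n₂ p : ℕ) : ℝ)
              - x * (D₁ * c + D₂ * ((k - c : ℕ) : ℝ)))) x := by
  simp_rw [one_sub_erlangMixture_sub_erlangMixture_pow]
  refine .const_add 1 <| hasDerivAt_mixturePowExpansion _ _ fun k c p s =>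
    (hasDerivAt_exp_neg_mul_mul_pow _ _ hx).congr_deriv ?_
  rw [neg_mul_comm, ← neg_mul, mul_comm x]
  field_simp
  ring

theorem Δ₁_pos {g κ : ℝ} {μ : ℕ} (hg : 0 < g) (hκ : 0 ≤ κ) (hμ : 0 < μ) :
    0 < Δ₁ g κ μ := by
  unfold Δ₁
  positivity

theorem Δ₂_pos {g κ : ℝ} {μ m : ℕ} (hg : 0 < g) (hκ : 0 ≤ κ) (hμ : 0 < μ) (hm : 0 < m) :
    0 < Δ₂ g κ μ m := by
  unfold Δ₂
  positivity

open Finset in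
theorem stmt4_general (yB κB : ℝ) (μB mB NB NA : ℕ)
    (hyB : 0 < yB) (hκB : 0 < κB) (hmB : 1 ≤ mB) (hμB : mB < μB)
    (hNB : 1 ≤ NB) :
    ∀ x : ℝ, 0 < x →
      HasDerivAt (fun y => (Fcdf1 (NB * yB) κB (NB * μB) (NB * mB) y) ^ NA)
        (∑ k ∈ Finset.Icc 1 NA, (-1 : ℝ) ^ k * (Nat.choose NA k : ℝ) *
          ∑ c ∈ Finset.range (k + 1), (Nat.choose k c : ℝ) *
            ∑ p ∈ Finset.Nat.antidiagonalTuple (NB * mB) c,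
              ((Nat.factorial c : ℝ) / ∏ q, (Nat.factorial (p q) : ℝ)) *
              (∏ q : Fin (NB * mB),
                ((1 / Δ₂ (NB * yB) κB (NB * μB) (NB * mB)) ^ (NB * mB - 1 - q.1) /
                    (Nat.factorial (NB * mB - 1 - q.1) : ℝ) *
                  ∑ w ∈ Finset.Icc 1 (q.1 + 1), A2 κB (NB * μB) (NB * mB) w) ^ (p q)) *
              ∑ s ∈ Finset.Nat.antidiagonalTuple (NB * μB - NB * mB) (k - c),
                ((Nat.factorial (k - c) : ℝ) / ∏ t, (Nat.factorial (s t) : ℝ)) *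
                (∏ t : Fin (NB * μB - NB * mB),
                  ((1 / Δ₁ (NB * yB) κB (NB * μB)) ^ (NB * μB - NB * mB - 1 - t.1) /
                      (Nat.factorial (NB * μB - NB * mB - 1 - t.1) : ℝ) *
                    ∑ w ∈ Finset.Icc 1 (t.1 + 1), A1 κB (NB * μB) (NB * mB) w) ^ (s t)) *
                (Real.exp (-x * (((k - c : ℕ) : ℝ) / Δ₁ (NB * yB) κB (NB * μB)
                      + (c : ℝ) / Δ₂ (NB * yB) κB (NB * μB) (NB * mB))) /
                  (Δ₁ (NB * yB) κB (NB * μB) * Δ₂ (NB * yB) κB (NB * μB) (NB * mB))) *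
                x ^ ((((∑ t : Fin (NB * μB - NB * mB), (NB * μB - NB * mB - 1 - t.1) * s t)
                    + (∑ q : Fin (NB * mB), (NB * mB - 1 - q.1) * p q) : ℕ) : ℤ) - 1) *
                (Δ₁ (NB * yB) κB (NB * μB) * Δ₂ (NB * yB) κB (NB * μB) (NB * mB) *
                    (((∑ t : Fin (NB * μB - NB * mB), (NB * μB - NB * mB - 1 - t.1) * s t)
                      + (∑ q : Fin (NB * mB), (NB * mB - 1 - q.1) * p q) : ℕ) : ℝ)
                  - x * (Δ₁ (NB * yB) κB (NB * μB) * (c : ℝ)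
                      + Δ₂ (NB * yB) κB (NB * μB) (NB * mB) * ((k - c : ℕ) : ℝ))))
        x := by
  intro x hx
  have hg : 0 < (NB : ℝ) * yB := by positivity
  have hμ : 0 < NB * μB := Nat.mul_pos hNB (by omega)
  have hm : 0 < NB * mB := Nat.mul_pos hNB hmB
  have h := hasDerivAt_one_sub_erlangMixture_sub_erlangMixture_pow NA (NB * μB - NB * mB) (NB * mB)
    (A1 κB (NB * μB) (NB * mB)) (A2 κB (NB * μB) (NB * mB)) (Δ₁_pos hg hκB.le hμ).ne'
    (Δ₂_pos hg hκB.le hμ hm).ne' hx.ne'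
  simp only [mixturePowExpansion, erlangMixtureCoeff, weightedDegree, mul_assoc] at h ⊢
  exact h

open Finset in
/-- Proposition 2, case `m_B < μ_B` (Eq. (14)): the PDF of the TAS/MRC legitimate-link SNR,
i.e. the derivative of `[F₁(x)]^{N_A}`, where `F₁` is the Bob-side κ-μ shadowed CDF with
parameters `(N_B ȳ_B, κ_B, N_B μ_B, N_B m_B)`. -/
theorem stmt4 (yB κB : ℝ) (μB mB NB NA : ℕ)
    (hyB : 0 < yB) (hκB : 0 < κB) (hmB : 1 ≤ mB) (hμB : mB < μB)
    (hNB : 1 ≤ NB) (hNA : 1 ≤ NA) :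
    ∀ x : ℝ, 0 < x →
      HasDerivAt (fun y => (Fcdf1 (NB * yB) κB (NB * μB) (NB * mB) y) ^ NA)
        (∑ k ∈ Finset.Icc 1 NA, (-1 : ℝ) ^ k * (Nat.choose NA k : ℝ) *
          ∑ c ∈ Finset.range (k + 1), (Nat.choose k c : ℝ) *
            ∑ p ∈ Finset.Nat.antidiagonalTuple (NB * mB) c,
              ((Nat.factorial c : ℝ) / ∏ q, (Nat.factorial (p q) : ℝ)) *
              (∏ q : Fin (NB * mB),
                ((1 / Δ₂ (NB * yB) κB (NB * μB) (NB * mB)) ^ (NB * mB - 1 - q.1) /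
                    (Nat.factorial (NB * mB - 1 - q.1) : ℝ) *
                  ∑ w ∈ Finset.Icc 1 (q.1 + 1), A2 κB (NB * μB) (NB * mB) w) ^ (p q)) *
              ∑ s ∈ Finset.Nat.antidiagonalTuple (NB * μB - NB * mB) (k - c),
                ((Nat.factorial (k - c) : ℝ) / ∏ t, (Nat.factorial (s t) : ℝ)) *
                (∏ t : Fin (NB * μB - NB * mB),
                  ((1 / Δ₁ (NB * yB) κB (NB * μB)) ^ (NB * μB - NB * mB - 1 - t.1) /
                      (Nat.factorial (NB * μB - NB * mB - 1 - t.1) : ℝ) *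
                    ∑ w ∈ Finset.Icc 1 (t.1 + 1), A1 κB (NB * μB) (NB * mB) w) ^ (s t)) *
                (Real.exp (-x * (((k - c : ℕ) : ℝ) / Δ₁ (NB * yB) κB (NB * μB)
                      + (c : ℝ) / Δ₂ (NB * yB) κB (NB * μB) (NB * mB))) /
                  (Δ₁ (NB * yB) κB (NB * μB) * Δ₂ (NB * yB) κB (NB * μB) (NB * mB))) *
                x ^ ((((∑ t : Fin (NB * μB - NB * mB), (NB * μB - NB * mB - 1 - t.1) * s t)
                    + (∑ q : Fin (NB * mB), (NB * mB - 1 - q.1) * p q) : ℕ) : ℤ) - 1) *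
                (Δ₁ (NB * yB) κB (NB * μB) * Δ₂ (NB * yB) κB (NB * μB) (NB * mB) *
                    (((∑ t : Fin (NB * μB - NB * mB), (NB * μB - NB * mB - 1 - t.1) * s t)
                      + (∑ q : Fin (NB * mB), (NB * mB - 1 - q.1) * p q) : ℕ) : ℝ)
                  - x * (Δ₁ (NB * yB) κB (NB * μB) * (c : ℝ)
                      + Δ₂ (NB * yB) κB (NB * μB) (NB * mB) * ((k - c : ℕ) : ℝ))))
        x :=
  stmt4_general yB κB μB mB NB NA hyB hκB hmB hμB hNB
end

section
/- Closed-form average capacity of a κ-μ shadowed channel, case m ≥ μ (evaluation of C̄_E in Appendix E, Eq. (E.4)): assume m ≥ μ ≥ 1 and let F be the κ-μ shadowed CDF. Then (1/ln 2)·∫₀^∞ (1 − F(γ))/(1+γ) dγ = (1/ln 2)·e^{1/Δ₂}·Σ_{j=0}^{m−μ} Bⱼ·Σ_{r=0}^{m−j−1} (1/Δ₂)^r·Γᵤ(−r, 1/Δ₂). -/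
noncomputable def Bco (κ : ℝ) (μ m j : ℕ) : ℝ :=
  (Nat.choose (m - μ) j : ℝ) * ((m : ℝ) / (μ * κ + m)) ^ j *
    ((μ * κ) / (μ * κ + m)) ^ (m - μ - j)

/-- The κ-μ shadowed CDF in the case `m ≥ μ`. -/
noncomputable def Fcdf2 (g κ : ℝ) (μ m : ℕ) (x : ℝ) : ℝ :=
  1 - ∑ j ∈ Finset.range (m - μ + 1), Bco κ μ m j * Real.exp (-x / Δ₂ g κ μ m) *
        ∑ r ∈ Finset.range (m - j), (x / Δ₂ g κ μ m) ^ r / (Nat.factorial r : ℝ)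

open MeasureTheory in
/-- The (generalized) upper incomplete gamma function `Γᵤ(a, x) = ∫_x^∞ t^{a−1} e^{−t} dt`,
convergent for every real `a` when `x > 0`. -/
noncomputable def Gammau (a x : ℝ) : ℝ := ∫ t in Set.Ioi x, t ^ (a - 1) * Real.exp (-t)

/-!
Writing `c = 1/Δ₂`, the survival function `1 − F(γ)` is a finite mixture of Poisson weights
`e^{−cγ}(cγ)^r/r!`, so everything reduces to the integrals
`L_r = ∫₀^∞ (cx)^r/r! · e^{−cx}/(1+x) dx`. Writing `x/(1+x) = 1 − 1/(1+x)` gives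
`L_{r+1} = (1 − c L_r)/(r+1)`, and integrating by parts shows that
`M_r = ∫₀^∞ e^{−cx}/(1+x)^{r+1} dx` obeys the same recursion with `M_0 = L_0`; hence `L_r = M_r`.
Finally the substitution `t = c(1+x)` turns `Γᵤ(−r, c)` into `e^{−c} c^{−r} M_r`.
-/

open MeasureTheory Set Real Filter
open scoped Nat Topology

theorem integral_Ioi_comp_add_right {E : Type*} [NormedAddCommGroup E] [NormedSpace ℝ E]
    (f : ℝ → E) (a d : ℝ) : ∫ x in Ioi a, f (x + d) = ∫ x in Ioi (a + d), f x := by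
  rw [← (measurePreserving_add_right volume d).setIntegral_preimage_emb
    (measurableEmbedding_addRight d) f (Ioi (a + d)), preimage_add_const_Ioi, add_sub_cancel_right]

variable {c : ℝ}

theorem Gammau_eq_rpow_mul_integral (a : ℝ) (hc : 0 < c) :
    Gammau a c = c ^ a * ∫ x in Ioi 0, (1 + x) ^ (a - 1) * exp (-(c * (1 + x))) := by
  have hsub := integral_comp_mul_left_Ioi (fun y => (y + c) ^ (a - 1) * exp (-(y + c))) 0 hc
  rw [mul_zero, smul_eq_mul, integral_Ioi_comp_add_right (fun t => t ^ (a - 1) * exp (-t)),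
    zero_add] at hsub
  rw [Gammau, ← mul_inv_cancel_left₀ hc.ne' (∫ t in Ioi c, _), ← hsub, ← integral_const_mul,
    ← integral_const_mul]
  refine setIntegral_congr_fun measurableSet_Ioi fun x hx => ?_
  have h1x : 0 ≤ 1 + x := by linarith [mem_Ioi.mp hx]
  rw [show c * x + c = c * (1 + x) by ring, mul_rpow hc.le h1x, rpow_sub_one hc.ne']
  field_simp

theorem exp_mul_pow_mul_Gammau_neg_natCast (hc : 0 < c) (n : ℕ) :
    exp c * c ^ n * Gammau (-n) c = ∫ x in Ioi 0, exp (-(c * x)) / (1 + x) ^ (n + 1) := by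
  rw [Gammau_eq_rpow_mul_integral _ hc, ← mul_assoc, ← integral_const_mul]
  refine setIntegral_congr_fun measurableSet_Ioi fun x hx => ?_
  have h1x : 0 < 1 + x := by linarith [mem_Ioi.mp hx]
  rw [show -(n : ℝ) - 1 = -((n + 1 : ℕ) : ℝ) by push_cast; ring, rpow_neg h1x.le, rpow_natCast,
    rpow_neg hc.le, rpow_natCast, mul_add, mul_one, neg_add, exp_add]
  field_simp
  rw [← exp_add, add_neg_cancel, exp_zero]

theorem integrableOn_exp_neg_mul_div_one_add_pow (hc : 0 < c) (n : ℕ) :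
    IntegrableOn (fun x => exp (-(c * x)) / (1 + x) ^ n) (Ioi 0) := by
  refine (exp_neg_integrableOn_Ioi 0 hc).mono' (Measurable.aestronglyMeasurable (by fun_prop)) ?_
  filter_upwards [self_mem_ae_restrict measurableSet_Ioi] with x hx
  have h1x : 1 ≤ 1 + x := by linarith [mem_Ioi.mp hx]
  rw [norm_div, norm_pow, Real.norm_of_nonneg (exp_pos _).le,
    Real.norm_of_nonneg (zero_le_one.trans h1x), neg_mul]
  exact div_le_self (exp_pos _).le (one_le_pow₀ h1x)

theorem integrableOn_pow_mul_exp_neg_mul (hc : 0 < c) (n : ℕ) :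
    IntegrableOn (fun x => x ^ n * exp (-(c * x))) (Ioi 0) := by
  refine (integrableOn_rpow_mul_exp_neg_mul_rpow (p := 1) (s := n)
    (neg_one_lt_zero.trans_le n.cast_nonneg) one_pos hc).congr_fun (fun x _ => ?_) measurableSet_Ioi
  simp

theorem integral_pow_mul_exp_neg_mul_Ioi (hc : 0 < c) (n : ℕ) :
    ∫ x in Ioi 0, x ^ n * exp (-(c * x)) = n ! / c ^ (n + 1) := by
  have h := integral_rpow_mul_exp_neg_mul_Ioi (a := n + 1) (by positivity) hc
  rw [add_sub_cancel_right, Gamma_nat_eq_factorial, ← Nat.cast_add_one, rpow_natCast] at h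
  simp_rw [← rpow_natCast _ n]
  rw [h, one_div, inv_pow, div_eq_mul_inv, mul_comm]

theorem integrableOn_poisson_div_one_add (hc : 0 < c) (n : ℕ) :
    IntegrableOn (fun x => (c * x) ^ n / n ! * exp (-(c * x)) / (1 + x)) (Ioi 0) := by
  refine ((integrableOn_pow_mul_exp_neg_mul hc n).const_mul (c ^ n / n !)).mono'
    (Measurable.aestronglyMeasurable (by fun_prop)) ?_
  filter_upwards [self_mem_ae_restrict measurableSet_Ioi] with x hx
  have hx0 : 0 < x := hx
  rw [Real.norm_of_nonneg (by positivity), mul_pow, div_le_iff₀ (by positivity)]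
  calc c ^ n * x ^ n / n ! * exp (-(c * x))
      = c ^ n / n ! * (x ^ n * exp (-(c * x))) * 1 := by ring
    _ ≤ c ^ n / n ! * (x ^ n * exp (-(c * x))) * (1 + x) := by gcongr; linarith

theorem integral_exp_neg_mul_div_one_add_pow_succ_succ (hc : 0 < c) (n : ℕ) :
    ∫ x in Ioi 0, exp (-(c * x)) / (1 + x) ^ (n + 2) =
      (1 - c * ∫ x in Ioi 0, exp (-(c * x)) / (1 + x) ^ (n + 1)) / (n + 1) := by
  set F : ℝ → ℝ := fun x => -(exp (-(c * x)) * ((1 + x) ^ (n + 1))⁻¹) / (n + 1)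
  have hderiv : ∀ x ∈ Ici (0 : ℝ), HasDerivAt F
      (c / (n + 1) * (exp (-(c * x)) / (1 + x) ^ (n + 1)) + exp (-(c * x)) / (1 + x) ^ (n + 2))
      x := by
    intro x hx
    have h1x : 1 + x ≠ 0 := by linarith [mem_Ici.mp hx]
    have hexp : HasDerivAt (fun x => exp (-(c * x))) (exp (-(c * x)) * -c) x := by
      simpa using ((hasDerivAt_id x).const_mul c).neg.exp
    have hpow := (((hasDerivAt_id x).const_add 1).fun_pow (n + 1)).inv (pow_ne_zero _ h1x)
    refine ((hexp.mul hpow).neg.div_const ((n : ℝ) + 1)).congr_deriv ?_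
    simp only [id, Pi.inv_apply, Nat.add_sub_cancel]
    push_cast
    field_simp
    ring
  have hlim : Tendsto F atTop (𝓝 0) := by
    have hexp := tendsto_exp_neg_atTop_nhds_zero.comp (tendsto_id.const_mul_atTop hc)
    have hpow := tendsto_inv_atTop_zero.comp
      ((tendsto_pow_atTop (α := ℝ) (Nat.succ_ne_zero n)).comp
        (tendsto_atTop_add_const_left atTop (1 : ℝ) tendsto_id))
    simpa [F] using ((hexp.mul hpow).neg.div_const ((n : ℝ) + 1))
  have hM₁ := (integrableOn_exp_neg_mul_div_one_add_pow hc (n + 1)).const_mul (c / (n + 1))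
  have hM₂ := integrableOn_exp_neg_mul_div_one_add_pow hc (n + 2)
  have hFTC := integral_Ioi_of_hasDerivAt_of_tendsto' hderiv (hM₁.add hM₂) hlim
  rw [integral_add hM₁ hM₂, integral_const_mul] at hFTC
  simp only [F, mul_zero, neg_zero, exp_zero, add_zero, one_pow, inv_one, mul_one] at hFTC
  rw [eq_div_iff (by positivity)]
  field_simp at hFTC
  linarith

theorem integral_poisson_succ_div_one_add (hc : 0 < c) (n : ℕ) :
    ∫ x in Ioi 0, (c * x) ^ (n + 1) / (n + 1)! * exp (-(c * x)) / (1 + x) =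
      (1 - c * ∫ x in Ioi 0, (c * x) ^ n / n ! * exp (-(c * x)) / (1 + x)) / (n + 1) := by
  have hsplit : ∀ x ∈ Ioi (0 : ℝ),
      (c * x) ^ (n + 1) / (n + 1)! * exp (-(c * x)) / (1 + x) =
        c ^ (n + 1) / (n + 1)! * (x ^ n * exp (-(c * x))) -
          c / (n + 1) * ((c * x) ^ n / n ! * exp (-(c * x)) / (1 + x)) := by
    intro x hx
    have h1x : 1 + x ≠ 0 := by linarith [mem_Ioi.mp hx]
    rw [Nat.factorial_succ]
    push_cast
    field_simp
    ring
  rw [setIntegral_congr_fun measurableSet_Ioi hsplit,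
    integral_sub ((integrableOn_pow_mul_exp_neg_mul hc n).const_mul _)
      ((integrableOn_poisson_div_one_add hc n).const_mul _),
    integral_const_mul, integral_const_mul, integral_pow_mul_exp_neg_mul_Ioi hc n,
    Nat.factorial_succ]
  push_cast
  field_simp

theorem integral_poisson_div_one_add_eq (hc : 0 < c) (n : ℕ) :
    ∫ x in Ioi 0, (c * x) ^ n / n ! * exp (-(c * x)) / (1 + x) =
      ∫ x in Ioi 0, exp (-(c * x)) / (1 + x) ^ (n + 1) := by
  induction n with
  | zero => simp
  | succ n ih =>
    rw [integral_poisson_succ_div_one_add hc, integral_exp_neg_mul_div_one_add_pow_succ_succ hc, ih]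

theorem integral_poisson_div_one_add (hc : 0 < c) (n : ℕ) :
    ∫ x in Ioi 0, (c * x) ^ n / n ! * exp (-(c * x)) / (1 + x) = exp c * c ^ n * Gammau (-n) c :=
  (integral_poisson_div_one_add_eq hc n).trans (exp_mul_pow_mul_Gammau_neg_natCast hc n).symm

theorem one_sub_Fcdf2_div_one_add (g κ : ℝ) (μ m : ℕ) (γ : ℝ) :
    (1 - Fcdf2 g κ μ m γ) / (1 + γ) =
      ∑ j ∈ Finset.range (m - μ + 1), Bco κ μ m j * ∑ r ∈ Finset.range (m - j),
        (1 / Δ₂ g κ μ m * γ) ^ r / r ! * exp (-(1 / Δ₂ g κ μ m * γ)) / (1 + γ) := by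
  simp only [Fcdf2, sub_sub_cancel, one_div_mul_eq_div, neg_div, Finset.sum_div, Finset.mul_sum]
  refine Finset.sum_congr rfl fun j _ => Finset.sum_congr rfl fun r _ => ?_
  ring

theorem integral_one_sub_Fcdf2_div_one_add {g κ : ℝ} {μ m : ℕ} (hΔ : 0 < Δ₂ g κ μ m) :
    ∫ γ in Ioi 0, (1 - Fcdf2 g κ μ m γ) / (1 + γ) =
      ∑ j ∈ Finset.range (m - μ + 1), Bco κ μ m j * ∑ r ∈ Finset.range (m - j),
        exp (1 / Δ₂ g κ μ m) * (1 / Δ₂ g κ μ m) ^ r * Gammau (-r) (1 / Δ₂ g κ μ m) := by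
  have hc : 0 < 1 / Δ₂ g κ μ m := one_div_pos.mpr hΔ
  simp_rw [one_sub_Fcdf2_div_one_add]
  rw [integral_finsetSum _ fun j _ =>
    (integrable_finsetSum _ fun r _ => integrableOn_poisson_div_one_add hc r).const_mul _]
  refine Finset.sum_congr rfl fun j _ => ?_
  rw [integral_const_mul, integral_finsetSum _ fun r _ => integrableOn_poisson_div_one_add hc r]
  simp_rw [integral_poisson_div_one_add hc]

open MeasureTheory in
/-- Closed-form average capacity of a κ-μ shadowed channel, case `m ≥ μ` (evaluation of
`C̄_E` in Appendix E, Eq. (E.4)): `(1/ln 2)∫₀^∞ (1−F(γ))/(1+γ) dγ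
 = (1/ln 2) e^{1/Δ₂} Σ_{j=0}^{m−μ} Bⱼ Σ_{r=0}^{m−j−1} (1/Δ₂)^r Γᵤ(−r, 1/Δ₂)`. -/
theorem stmt19 (g κ : ℝ) (μ m : ℕ) (hg : 0 < g) (hκ : 0 < κ)
    (hμ : 1 ≤ μ) (hmμ : μ ≤ m) :
    ((1 / Real.log 2) * ∫ γ in Set.Ioi (0 : ℝ), (1 - Fcdf2 g κ μ m γ) / (1 + γ)) =
      (1 / Real.log 2) * Real.exp (1 / Δ₂ g κ μ m) *
        ∑ j ∈ Finset.range (m - μ + 1), Bco κ μ m j *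
          ∑ r ∈ Finset.range (m - j),
            (1 / Δ₂ g κ μ m) ^ r * Gammau (-(r : ℝ)) (1 / Δ₂ g κ μ m) := by
  have hμ₀ : (0 : ℝ) < μ := by exact_mod_cast hμ
  have hm₀ : (0 : ℝ) < m := by exact_mod_cast hμ.trans hmμ
  have hΔ : 0 < Δ₂ g κ μ m := by unfold Δ₂; positivity
  rw [integral_one_sub_Fcdf2_div_one_add hΔ]
  simp only [Finset.mul_sum]
  exact Finset.sum_congr rfl fun j _ => Finset.sum_congr rfl fun r _ => by ring
end
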